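/- arXiv:math/0002201 — 2 statements merged into one kernel-verified Lean document; each statement's English description precedes it below -/
import Mathlib

section
/- Let R be a ring, let m ≥ 1 be an integer, and let C and D be chain complexes of left R-modules indexed by the natural numbers (with differentials lowering degree by one) all of whose terms are projective R-modules. Suppose that the m-th differential d_m : D_m → D_{m-1} of D is the zero map, and that there exists a chain homotopy equivalence between C and D. Then the image of the m-th differential d_m : C_m → C_{m-1} of C is a direct summand of C_{m-1}, i.e. there exists a submodule S of C_{m-1} such that C_{m-1} is the internal direct sum of im(d_m) and S. -/
/-!
Let `e : C → D` be a homotopy equivalence and `d` the `m`-th differential of `C`. Since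
`D_m → D_{m-1}` vanishes, `e ∘ d = 0`. Evaluating a homotopy `𝟙 ≃ e⁻¹ ∘ e` after `d` then gives
`d = d ∘ s ∘ d`, where `s : C_{m-1} → C_m` is its component. Hence `d ∘ s` is an idempotent with
the same range as `d`, and its kernel complements that range.
-/

open CategoryTheory

namespace LinearMap

variable {R M N : Type*} [Ring R] [AddCommGroup M] [Module R M] [AddCommGroup N] [Module R N]

theorem isIdempotentElem_comp_of_comp_comp_eq_self {d : M →ₗ[R] N} {s : N →ₗ[R] M}
    (h : d ∘ₗ s ∘ₗ d = d) : IsIdempotentElem (d ∘ₗ s) := by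
  change (d ∘ₗ s ∘ₗ d) ∘ₗ s = d ∘ₗ s
  rw [h]

theorem range_comp_eq_of_comp_comp_eq_self {d : M →ₗ[R] N} {s : N →ₗ[R] M}
    (h : d ∘ₗ s ∘ₗ d = d) : range (d ∘ₗ s) = range d := by
  refine le_antisymm (range_comp_le_range s d) ?_
  calc range d = range ((d ∘ₗ s) ∘ₗ d) := by rw [comp_assoc, h]
    _ ≤ range (d ∘ₗ s) := range_comp_le_range d (d ∘ₗ s)

theorem isCompl_range_ker_comp_of_comp_comp_eq_self {d : M →ₗ[R] N} {s : N →ₗ[R] M}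
    (h : d ∘ₗ s ∘ₗ d = d) : IsCompl (range d) (ker (d ∘ₗ s)) :=
  range_comp_eq_of_comp_comp_eq_self h ▸
    IsIdempotentElem.isCompl (isIdempotentElem_comp_of_comp_comp_eq_self h)

end LinearMap

section Homotopy

variable {ι V : Type*} [Category V] [Preadditive V] {c : ComplexShape ι}
  {C D : HomologicalComplex V c}

theorem Homotopy.d_comp_f_eq {f g : C ⟶ D} (H : Homotopy f g) {i j : ι} (hij : c.Rel i j) :
    C.d i j ≫ f.f j = C.d i j ≫ H.hom j i ≫ D.d i j + C.d i j ≫ g.f j := by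
  rw [H.comm j, prevD_eq _ hij, dNext_eq_dFrom_fromNext]
  simp

theorem HomotopyEquiv.d_comp_homotopyHomInvId_symm_hom_comp_d (e : HomotopyEquiv C D) {i j : ι}
    (hij : c.Rel i j) (hD : D.d i j = 0) :
    C.d i j ≫ e.homotopyHomInvId.symm.hom j i ≫ C.d i j = C.d i j := by
  have hd : C.d i j ≫ e.hom.f j = 0 := by rw [← e.hom.comm, hD, Limits.comp_zero]
  simpa [reassoc_of% hd] using (e.homotopyHomInvId.symm.d_comp_f_eq hij).symm

end Homotopy

theorem image_middle_differential_isCompl_of_homotopyEquiv_general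
    (R : Type) [Ring R] (m : ℕ) (hm : 1 ≤ m)
    (C D : ChainComplex (ModuleCat R) ℕ)
    (hDm : D.d m (m - 1) = 0)
    (h : Nonempty (HomotopyEquiv C D)) :
    ∃ S : Submodule R (C.X (m - 1)),
      IsCompl (LinearMap.range (C.d m (m - 1)).hom) S := by
  obtain ⟨e⟩ := h
  have hrel : (ComplexShape.down ℕ).Rel m (m - 1) := Nat.sub_add_cancel hm
  have hsplit := e.d_comp_homotopyHomInvId_symm_hom_comp_d hrel hDm
  exact ⟨_, LinearMap.isCompl_range_ker_comp_of_comp_comp_eq_self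
    (by simpa only [ModuleCat.hom_comp, LinearMap.comp_assoc]
      using congrArg ModuleCat.Hom.hom hsplit)⟩

/-- **Lemma 2.2, (1) ⟹ (2).**  If a chain complex `C` of projective `R`-modules
(indexed by `ℕ`) is chain homotopy equivalent to a chain complex `D` of projective
`R`-modules whose `m`-th differential vanishes, then the image of the `m`-th
differential of `C` is a direct summand of `C_{m-1}`. -/
theorem image_middle_differential_isCompl_of_homotopyEquiv
    (R : Type) [Ring R] (m : ℕ) (hm : 1 ≤ m)
    (C D : ChainComplex (ModuleCat R) ℕ)
    (hC : ∀ i, Module.Projective R (C.X i))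
    (hD : ∀ i, Module.Projective R (D.X i))
    (hDm : D.d m (m - 1) = 0)
    (h : Nonempty (HomotopyEquiv C D)) :
    ∃ S : Submodule R (C.X (m - 1)),
      IsCompl (LinearMap.range (C.d m (m - 1)).hom) S :=
  image_middle_differential_isCompl_of_homotopyEquiv_general R m hm C D hDm h
end

section
/- Let R be a ring, let m ≥ 1 be an integer, and let C be a chain complex of projective left R-modules indexed by the natural numbers. Suppose that C is chain homotopy equivalent to a chain complex of projective R-modules whose m-th differential is zero, and that C is also chain homotopy equivalent to a chain complex of projective R-modules whose (m+1)-st differential is zero. Then C is chain homotopy equivalent to a single chain complex F of projective R-modules whose m-th differential d_m : F_m → F_{m-1} and whose (m+1)-st differential d_{m+1} : F_{m+1} → F_m are both zero. -/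
/-!
Composing the two equivalences gives `f : D ⟶ E`, `g : E ⟶ D` and a homotopy `s` from `g ∘ f`
to the identity. Let `d` be the `(m+1)`-st differential of `D`. As `g ∘ f ∘ d` factors through
the vanishing `(m+1)`-st differential of `E`, and the `m`-th differential of `D` vanishes, the
homotopy identity in degree `m` gives `d s d = -d`. So with `h = -s`, placed in the single degree
`m → m+1`, the null-homotopic endomorphism `d h + h d` of `D` is idempotent, and its complement
`p` is an idempotent homotopic to the identity with `p ∘ d = 0`. Idempotents of complexes of
modules split: the image `F` of `p` is homotopy equivalent to `D`, its modules are retracts of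
those of `D`, and its differentials vanish wherever the differential of `D` followed by `p` does.
-/

open CategoryTheory CategoryTheory.Limits

section Retract

variable {V : Type*} [Category V] [Preadditive V] {ι : Type*} {c : ComplexShape ι}
  {F K : HomologicalComplex V c} (i : F ⟶ K) (r : K ⟶ F)

def HomotopyEquiv.ofRetract (hir : i ≫ r = 𝟙 F) (H : Homotopy (r ≫ i) (𝟙 K)) :
    HomotopyEquiv K F where
  hom := r
  inv := i
  homotopyHomInvId := H
  homotopyInvHomId := Homotopy.ofEq hir

lemma HomologicalComplex.d_eq_zero_of_retract (hir : i ≫ r = 𝟙 F) {a b : ι}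
    (h : K.d a b ≫ (r ≫ i).f b = 0) : F.d a b = 0 := by
  have hr : r.f b = (r ≫ i).f b ≫ r.f b := by
    rw [HomologicalComplex.comp_f, Category.assoc, ← HomologicalComplex.comp_f, hir,
      HomologicalComplex.id_f, Category.comp_id]
  calc F.d a b = (i ≫ r).f a ≫ F.d a b := by rw [hir, HomologicalComplex.id_f, Category.id_comp]
    _ = i.f a ≫ (K.d a b ≫ (r ≫ i).f b) ≫ r.f b := by
      rw [HomologicalComplex.comp_f, Category.assoc, r.comm, Category.assoc, ← hr]
    _ = 0 := by rw [h, zero_comp, comp_zero]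

end Retract

lemma ModuleCat.projective_of_retract {R : Type*} [Ring R] {X Y : ModuleCat R}
    (i : X ⟶ Y) (r : Y ⟶ X) (hir : i ≫ r = 𝟙 X) [Module.Projective R Y] :
    Module.Projective R X :=
  Module.Projective.of_split i.hom r.hom (by rw [← ModuleCat.hom_comp, hir, ModuleCat.hom_id])

namespace ChainComplex

variable {V : Type*} [Category V] [Preadditive V]

lemma exists_d_comp_comp_d_eq_d {K L : ChainComplex V ℕ} {f : K ⟶ L} {g : L ⟶ K}
    (s : Homotopy (f ≫ g) (𝟙 K)) {k : ℕ} (hK : K.d (k + 1) k = 0)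
    (hL : L.d (k + 2) (k + 1) = 0) :
    ∃ h : K.X (k + 1) ⟶ K.X (k + 2),
      K.d (k + 2) (k + 1) ≫ h ≫ K.d (k + 2) (k + 1) = K.d (k + 2) (k + 1) := by
  refine ⟨-s.hom (k + 1) (k + 2), ?_⟩
  have hs : (f ≫ g).f (k + 1) = s.hom (k + 1) (k + 2) ≫ K.d (k + 2) (k + 1) + 𝟙 _ := by
    rw [s.comm, Homotopy.dNext_succ_chainComplex, hK, zero_comp, zero_add,
      Homotopy.prevD_chainComplex, HomologicalComplex.id_f]
  have hd : K.d (k + 2) (k + 1) ≫ (f ≫ g).f (k + 1) = 0 := by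
    rw [HomologicalComplex.comp_f, ← Category.assoc, ← f.comm, Category.assoc, ← Category.assoc,
      hL, comp_zero, zero_comp]
  rw [hs, Preadditive.comp_add, Category.comp_id, add_eq_zero_iff_neg_eq] at hd
  rw [Preadditive.neg_comp, Preadditive.comp_neg, hd]

variable (K : ChainComplex V ℕ) (k : ℕ) (h : K.X (k + 1) ⟶ K.X (k + 2))

def singleDegreeHom (i j : ℕ) : K.X i ⟶ K.X j :=
  if hij : i = k + 1 ∧ j = k + 2 then
    eqToHom (by rw [hij.1]) ≫ h ≫ eqToHom (by rw [hij.2])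
  else 0

@[simp]
lemma singleDegreeHom_self : singleDegreeHom K k h (k + 1) (k + 2) = h := by
  simp [singleDegreeHom]

lemma singleDegreeHom_of_ne {i j : ℕ} (hij : i ≠ k + 1 ∨ j ≠ k + 2) :
    singleDegreeHom K k h i j = 0 :=
  dif_neg (by tauto)

noncomputable def dhAddHd : K ⟶ K :=
  Homotopy.nullHomotopicMap (singleDegreeHom K k h)

lemma dhAddHd_f (i : ℕ) :
    (dhAddHd K k h).f i = K.d i (i - 1) ≫ singleDegreeHom K k h (i - 1) i +
      singleDegreeHom K k h i (i + 1) ≫ K.d (i + 1) i := by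
  rw [dhAddHd, Homotopy.nullHomotopicMap, ← dNext_nat, ← Homotopy.prevD_chainComplex]

lemma dhAddHd_f_succ : (dhAddHd K k h).f (k + 1) = h ≫ K.d (k + 2) (k + 1) := by
  rw [dhAddHd_f, singleDegreeHom_of_ne K k h (by omega), comp_zero, zero_add]
  exact congrArg (· ≫ K.d (k + 2) (k + 1)) (singleDegreeHom_self K k h)

lemma dhAddHd_f_succ_succ : (dhAddHd K k h).f (k + 2) = K.d (k + 2) (k + 1) ≫ h := by
  rw [dhAddHd_f, singleDegreeHom_of_ne K k h (i := k + 2) (by omega), zero_comp, add_zero]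
  exact congrArg (K.d (k + 2) (k + 1) ≫ ·) (singleDegreeHom_self K k h)

lemma dhAddHd_f_of_ne {i : ℕ} (h₁ : i ≠ k + 1) (h₂ : i ≠ k + 2) : (dhAddHd K k h).f i = 0 := by
  rw [dhAddHd_f, singleDegreeHom_of_ne K k h (by omega), singleDegreeHom_of_ne K k h (by omega),
    comp_zero, zero_comp, add_zero]

def homotopyIdSubDhAddHd : Homotopy (𝟙 K - dhAddHd K k h) (𝟙 K) where
  hom i j := -singleDegreeHom K k h i j
  zero i j hij := by
    rw [ComplexShape.down_Rel] at hij
    rw [singleDegreeHom_of_ne K k h (by omega), neg_zero]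
  comm i := by
    rw [show (fun i j => -singleDegreeHom K k h i j) = -singleDegreeHom K k h from rfl, map_neg,
      map_neg, HomologicalComplex.sub_f_apply]
    simp only [dhAddHd, Homotopy.nullHomotopicMap]
    abel

variable {K k h}

lemma dhAddHd_f_idem (hh : K.d (k + 2) (k + 1) ≫ h ≫ K.d (k + 2) (k + 1) = K.d (k + 2) (k + 1))
    (i : ℕ) : (dhAddHd K k h).f i ≫ (dhAddHd K k h).f i = (dhAddHd K k h).f i := by
  by_cases h₁ : i = k + 1
  · subst h₁
    rw [dhAddHd_f_succ, Category.assoc, hh]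
  by_cases h₂ : i = k + 2
  · subst h₂
    rw [dhAddHd_f_succ_succ, Category.assoc, reassoc_of% hh]
  rw [dhAddHd_f_of_ne K k h h₁ h₂, comp_zero]

lemma id_sub_dhAddHd_idem
    (hh : K.d (k + 2) (k + 1) ≫ h ≫ K.d (k + 2) (k + 1) = K.d (k + 2) (k + 1)) :
    (𝟙 K - dhAddHd K k h) ≫ (𝟙 K - dhAddHd K k h) = 𝟙 K - dhAddHd K k h := by
  ext i
  simp only [HomologicalComplex.comp_f, HomologicalComplex.sub_f_apply, HomologicalComplex.id_f,
    Preadditive.comp_sub, Preadditive.sub_comp, Category.id_comp, Category.comp_id,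
    dhAddHd_f_idem hh, sub_self, sub_zero]

lemma d_comp_id_sub_dhAddHd_f
    (hh : K.d (k + 2) (k + 1) ≫ h ≫ K.d (k + 2) (k + 1) = K.d (k + 2) (k + 1)) :
    K.d (k + 2) (k + 1) ≫ (𝟙 K - dhAddHd K k h).f (k + 1) = 0 := by
  rw [HomologicalComplex.sub_f_apply, HomologicalComplex.id_f, Preadditive.comp_sub,
    Category.comp_id, dhAddHd_f_succ, hh, sub_self]

end ChainComplex

theorem homotopyEquiv_complex_with_two_trivial_middle_differentials_general
    (R : Type) [Ring R] (m : ℕ) (hm : 1 ≤ m)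
    (C D E : ChainComplex (ModuleCat R) ℕ)
    (hD : ∀ i, Module.Projective R (D.X i))
    (hDm : D.d m (m - 1) = 0)
    (hEm : E.d (m + 1) m = 0)
    (hCD : Nonempty (HomotopyEquiv C D))
    (hCE : Nonempty (HomotopyEquiv C E)) :
    ∃ F : ChainComplex (ModuleCat R) ℕ,
      (∀ i, Module.Projective R (F.X i)) ∧
      F.d m (m - 1) = 0 ∧
      F.d (m + 1) m = 0 ∧
      Nonempty (HomotopyEquiv C F) := by
  obtain ⟨k, rfl⟩ : ∃ k, m = k + 1 := ⟨m - 1, by omega⟩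
  obtain ⟨φ⟩ := hCD
  obtain ⟨ψ⟩ := hCE
  obtain ⟨h, hh⟩ :=
    ChainComplex.exists_d_comp_comp_d_eq_d (φ.symm.trans ψ).homotopyHomInvId hDm hEm
  obtain ⟨F, i, r, hir, hri⟩ := IsIdempotentComplete.idempotents_split D _
    (ChainComplex.id_sub_dhAddHd_idem hh)
  refine ⟨F, fun n => ModuleCat.projective_of_retract (i.f n) (r.f n) ?_,
    HomologicalComplex.d_eq_zero_of_retract i r hir ?_,
    HomologicalComplex.d_eq_zero_of_retract i r hir ?_,
    ⟨φ.trans (.ofRetract i r hir (hri ▸ ChainComplex.homotopyIdSubDhAddHd D k h))⟩⟩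
  · rw [← HomologicalComplex.comp_f, hir, HomologicalComplex.id_f]
  · rw [hDm, zero_comp]
  · rw [hri]
    exact ChainComplex.d_comp_id_sub_dhAddHd_f hh

/-- If a chain complex `C` of projective `R`-modules (indexed by `ℕ`) is chain homotopy
equivalent to a complex of projective modules with vanishing `m`-th differential, and also
chain homotopy equivalent to a complex of projective modules with vanishing `(m+1)`-st
differential, then `C` is chain homotopy equivalent to a single complex `F` of projective
modules whose `m`-th and `(m+1)`-st differentials both vanish. -/
theorem homotopyEquiv_complex_with_two_trivial_middle_differentials
    (R : Type) [Ring R] (m : ℕ) (hm : 1 ≤ m)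
    (C D E : ChainComplex (ModuleCat R) ℕ)
    (hC : ∀ i, Module.Projective R (C.X i))
    (hD : ∀ i, Module.Projective R (D.X i))
    (hE : ∀ i, Module.Projective R (E.X i))
    (hDm : D.d m (m - 1) = 0)
    (hEm : E.d (m + 1) m = 0)
    (hCD : Nonempty (HomotopyEquiv C D))
    (hCE : Nonempty (HomotopyEquiv C E)) :
    ∃ F : ChainComplex (ModuleCat R) ℕ,
      (∀ i, Module.Projective R (F.X i)) ∧
      F.d m (m - 1) = 0 ∧
      F.d (m + 1) m = 0 ∧
      Nonempty (HomotopyEquiv C F) :=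
  homotopyEquiv_complex_with_two_trivial_middle_differentials_general R m hm C D E hD hDm hEm hCD
    hCE
end
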